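/- Weighted integral identities for the soliton: ∫_ℝ y²·Q(y)^(m+1) dy = ((m+1)/(m+3))·( 2·∫_ℝ y²·Q(y)² dy - ∫_ℝ Q(y)² dy ); ∫_ℝ y²·Q'(y)² dy = (2/(m+3))·∫_ℝ Q(y)² dy + ((m-1)/(m+3))·∫_ℝ y²·Q(y)² dy; and ∫_ℝ y⁴·Q(y)^(m+1) dy = ((m+1)/(m+3))·( 2·∫_ℝ y⁴·Q(y)² dy - 6·∫_ℝ y²·Q(y)² dy ). -/

import Mathlib

/-! With `T = tanh ((m - 1) / 2 * y)` the soliton satisfies `Q' = -T Q`,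
`T' = (m - 1) / 2 * (1 - T²)` and `Q ^ (m - 1) = (m + 1) / 2 * (1 - T²)`, so `Q ^ (m + 1)` and
`Q' ^ 2` are combinations of `Q²` and `T² Q²`. Integrating the derivatives of `y ^ (n + 1) Q²`
and `y ^ (n + 2) T Q²` over `ℝ` (no boundary terms, by exponential decay) expresses the weighted
moments of `T² Q²` through those of `Q²`. -/

open Real MeasureTheory

/-- The explicit soliton profile `Q(x) = ((m+1)/(2 cosh²(((m-1)/2) x)))^(1/(m-1))`. -/
noncomputable def solQ (m : ℝ) (x : ℝ) : ℝ :=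
  ((m + 1) / (2 * Real.cosh ((m - 1) / 2 * x) ^ 2)) ^ (1 / (m - 1))

open Filter

theorem Real.one_sub_tanh_sq (x : ℝ) : 1 - tanh x ^ 2 = (cosh x ^ 2)⁻¹ := by
  have := (cosh_pos x).ne'
  rw [tanh_eq_sinh_div_cosh]
  field_simp
  linear_combination cosh_sq_sub_sinh_sq x

theorem Real.one_sub_tanh_sq_pos (x : ℝ) : 0 < 1 - tanh x ^ 2 := by
  rw [one_sub_tanh_sq]
  have := cosh_pos x
  positivity

theorem Real.hasDerivAt_tanh (x : ℝ) : HasDerivAt tanh (1 - tanh x ^ 2) x := by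
  have h := (hasDerivAt_sinh x).div (hasDerivAt_cosh x) (cosh_pos x).ne'
  have htanh : tanh = sinh / cosh := funext fun y => tanh_eq_sinh_div_cosh y
  rw [one_sub_tanh_sq, htanh]
  refine h.congr_deriv ?_
  rw [← sq, ← sq, cosh_sq_sub_sinh_sq, one_div]

theorem HasDerivAt.tanh {f : ℝ → ℝ} {f' x : ℝ} (hf : HasDerivAt f f' x) :
    HasDerivAt (fun x => tanh (f x)) ((1 - tanh (f x) ^ 2) * f') x :=
  (hasDerivAt_tanh (f x)).comp x hf

@[fun_prop]
theorem Real.continuous_tanh : Continuous tanh :=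
  continuous_iff_continuousAt.2 fun x => (hasDerivAt_tanh x).continuousAt

theorem Real.exp_abs_le_two_mul_cosh (x : ℝ) : exp |x| ≤ 2 * cosh x := by
  rw [← cosh_abs, cosh_eq]
  linarith [exp_pos (-|x|)]

theorem integrable_abs_pow_mul_exp_neg_abs (n : ℕ) :
    Integrable fun x : ℝ => |x| ^ n * exp (-|x|) := by
  refine (Continuous.locallyIntegrable (by fun_prop))
    |>.integrable_of_isBigO_atTop_of_norm_isNegInvariant (g := fun x => exp (-(1 / 2) * x))
    (ae_of_all _ fun x => by simp) ?_
    ⟨Set.Ioi 0, Ioi_mem_atTop 0, exp_neg_integrableOn_Ioi 0 (by norm_num)⟩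
  refine (Gamma_integrand_isLittleO n).isBigO.congr' ?_ EventuallyEq.rfl
  filter_upwards [eventually_ge_atTop 0] with x hx
  rw [abs_of_nonneg hx, rpow_natCast, mul_comm]

section Soliton

variable {m : ℝ}

theorem solQ_eq_rpow_one_sub_tanh_sq (m y : ℝ) :
    solQ m y = ((m + 1) / 2 * (1 - tanh ((m - 1) / 2 * y) ^ 2)) ^ (1 / (m - 1)) := by
  rw [solQ, one_sub_tanh_sq, ← div_eq_mul_inv, div_div]

theorem solQ_pos (hm : -1 < m) (y : ℝ) : 0 < solQ m y := by
  rw [solQ_eq_rpow_one_sub_tanh_sq]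
  have := one_sub_tanh_sq_pos ((m - 1) / 2 * y)
  exact rpow_pos_of_pos (by nlinarith) _

theorem solQ_rpow_add_one (hm : 1 < m) (y : ℝ) :
    solQ m y ^ (m + 1) = (m + 1) / 2 * (1 - tanh ((m - 1) / 2 * y) ^ 2) * solQ m y ^ 2 := by
  have hQ := solQ_pos (by linarith) y
  have hb := one_sub_tanh_sq_pos ((m - 1) / 2 * y)
  conv_lhs => rw [show m + 1 = (m - 1) + 2 by ring, rpow_add hQ, rpow_two]
  congr 1
  rw [solQ_eq_rpow_one_sub_tanh_sq, ← rpow_mul (by nlinarith),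
    one_div_mul_cancel (by linarith), rpow_one]

theorem hasDerivAt_solQ (hm : 1 < m) (y : ℝ) :
    HasDerivAt (solQ m) (-tanh ((m - 1) / 2 * y) * solQ m y) y := by
  rw [show solQ m = _ from funext (solQ_eq_rpow_one_sub_tanh_sq m)]
  set c := (m - 1) / 2 with hc
  have ht := one_sub_tanh_sq_pos (c * y)
  have hb : 0 < (m + 1) / 2 * (1 - tanh (c * y) ^ 2) := by nlinarith
  refine (((((hasDerivAt_id' y).const_mul c).tanh.fun_pow 2).const_sub 1).const_mul
    ((m + 1) / 2) |>.rpow_const (p := 1 / (m - 1)) (Or.inl hb.ne')).congr_deriv ?_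
  beta_reduce
  rw [rpow_sub_one hb.ne']
  generalize ((m + 1) / 2 * (1 - tanh (c * y) ^ 2)) ^ (1 / (m - 1)) = Q
  have : m - 1 ≠ 0 := by linarith
  field_simp
  ring

theorem solQ_le (hm : 1 < m) (y : ℝ) :
    solQ m y ≤ (2 * (m + 1)) ^ (1 / (m - 1)) * exp (-|y|) := by
  set c := (m - 1) / 2 with hc
  have hcosh : exp |c * y| ^ 2 ≤ (2 * cosh (c * y)) ^ 2 :=
    pow_le_pow_left₀ (exp_pos _).le (exp_abs_le_two_mul_cosh _) 2
  have hexp : exp (-|y|) ^ (m - 1) * exp |c * y| ^ 2 = 1 := by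
    rw [← exp_mul, sq, ← exp_add, ← exp_add, abs_mul, abs_of_pos (by positivity : 0 < c), hc,
      exp_eq_one_iff]
    ring
  have hbase : (m + 1) / (2 * cosh (c * y) ^ 2) ≤ 2 * (m + 1) * exp (-|y|) ^ (m - 1) := by
    have := cosh_pos (c * y)
    have hE : 0 ≤ (m + 1) * exp (-|y|) ^ (m - 1) := by positivity
    rw [div_le_iff₀ (by positivity)]
    nlinarith [mul_le_mul_of_nonneg_left hcosh hE]
  calc solQ m y ≤ (2 * (m + 1) * exp (-|y|) ^ (m - 1)) ^ (1 / (m - 1)) :=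
        rpow_le_rpow (by have := cosh_pos (c * y); positivity) hbase
          (one_div_nonneg.2 (by linarith))
    _ = (2 * (m + 1)) ^ (1 / (m - 1)) * exp (-|y|) := by
        rw [mul_rpow (by linarith) (by positivity), ← rpow_mul (exp_pos _).le,
          mul_one_div_cancel (by linarith), rpow_one]

theorem continuous_solQ (hm : 1 < m) : Continuous (solQ m) :=
  continuous_iff_continuousAt.2 fun y => (hasDerivAt_solQ hm y).continuousAt

theorem integrable_pow_mul_tanh_pow_mul_solQ_sq (hm : 1 < m) (k j : ℕ) :
    Integrable fun y => y ^ k * tanh ((m - 1) / 2 * y) ^ j * solQ m y ^ 2 := by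
  set C := (2 * (m + 1)) ^ (1 / (m - 1))
  refine ((integrable_abs_pow_mul_exp_neg_abs k).const_mul (C ^ 2)).mono'
    (by have := continuous_solQ hm; fun_prop) (ae_of_all _ fun y => ?_)
  have hQ := solQ_pos (by linarith) y
  have hT : |tanh ((m - 1) / 2 * y)| ^ j ≤ 1 :=
    pow_le_one₀ (abs_nonneg _) (abs_le.2 ⟨(neg_one_lt_tanh _).le, (tanh_lt_one _).le⟩)
  calc ‖y ^ k * tanh ((m - 1) / 2 * y) ^ j * solQ m y ^ 2‖
      ≤ |y| ^ k * solQ m y ^ 2 := by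
        rw [norm_mul, norm_mul, norm_pow, norm_pow, Real.norm_eq_abs, Real.norm_eq_abs,
          Real.norm_eq_abs, abs_of_pos (pow_pos hQ 2)]
        gcongr
        exact mul_le_of_le_one_right (by positivity) hT
    _ ≤ |y| ^ k * (C * exp (-|y|)) ^ 2 := by gcongr; exact solQ_le hm y
    _ = C ^ 2 * (|y| ^ k * exp (-|y|)) * exp (-|y|) := by ring
    _ ≤ C ^ 2 * (|y| ^ k * exp (-|y|)) :=
        mul_le_of_le_one_right (by positivity) (exp_le_one_iff.2 (by simp))

theorem integral_pow_succ_mul_tanh_mul_solQ_sq (hm : 1 < m) (n : ℕ) :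
    ∫ y, y ^ (n + 1) * tanh ((m - 1) / 2 * y) * solQ m y ^ 2
      = (n + 1) / 2 * ∫ y, y ^ n * solQ m y ^ 2 := by
  have hI := integrable_pow_mul_tanh_pow_mul_solQ_sq hm
  have h0 : Integrable fun y => y ^ n * solQ m y ^ 2 := by simpa using hI n 0
  have h1 : Integrable fun y => y ^ (n + 1) * tanh ((m - 1) / 2 * y) * solQ m y ^ 2 := by
    simpa using hI (n + 1) 1
  have hF (y : ℝ) : HasDerivAt (fun y => y ^ (n + 1) * solQ m y ^ 2)
      ((n + 1) * (y ^ n * solQ m y ^ 2)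
        + -2 * (y ^ (n + 1) * tanh ((m - 1) / 2 * y) * solQ m y ^ 2)) y := by
    refine ((hasDerivAt_pow (n + 1) y).mul ((hasDerivAt_solQ hm y).fun_pow 2)).congr_deriv ?_
    push_cast
    ring
  have hibp := integral_eq_zero_of_hasDerivAt_of_integrable hF
    ((h0.const_mul _).add (h1.const_mul _)) (by simpa using hI (n + 1) 0)
  rw [integral_add (h0.const_mul _) (h1.const_mul _), integral_const_mul,
    integral_const_mul] at hibp
  linarith

theorem integral_pow_mul_tanh_sq_mul_solQ_sq (hm : 1 < m) (n : ℕ) :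
    ∫ y, y ^ (n + 2) * tanh ((m - 1) / 2 * y) ^ 2 * solQ m y ^ 2
      = ((n + 1) * (n + 2) * (∫ y, y ^ n * solQ m y ^ 2)
        + (m - 1) * ∫ y, y ^ (n + 2) * solQ m y ^ 2) / (m + 3) := by
  set c := (m - 1) / 2 with hc
  have hI := integrable_pow_mul_tanh_pow_mul_solQ_sq hm
  have h1 : Integrable fun y => y ^ (n + 1) * tanh (c * y) * solQ m y ^ 2 := by
    simpa using hI (n + 1) 1
  have h2 : Integrable fun y => y ^ (n + 2) * solQ m y ^ 2 := by simpa using hI (n + 2) 0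
  have h12 : Integrable fun y =>
      (n + 2) * (y ^ (n + 1) * tanh (c * y) * solQ m y ^ 2) + c * (y ^ (n + 2) * solQ m y ^ 2) :=
    (h1.const_mul _).add (h2.const_mul _)
  have hF (y : ℝ) : HasDerivAt (fun y => y ^ (n + 2) * tanh (c * y) * solQ m y ^ 2)
      (((n + 2) * (y ^ (n + 1) * tanh (c * y) * solQ m y ^ 2) + c * (y ^ (n + 2) * solQ m y ^ 2))
        + -(c + 2) * (y ^ (n + 2) * tanh (c * y) ^ 2 * solQ m y ^ 2)) y := by
    refine (((hasDerivAt_pow (n + 2) y).fun_mul ((hasDerivAt_id' y).const_mul c).tanh).fun_mul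
      ((hasDerivAt_solQ hm y).fun_pow 2)).congr_deriv ?_
    push_cast
    ring
  have hibp := integral_eq_zero_of_hasDerivAt_of_integrable hF
    (h12.add ((hI (n + 2) 2).const_mul _)) (by simpa using hI (n + 2) 1)
  rw [integral_add h12 ((hI (n + 2) 2).const_mul _), integral_add (h1.const_mul _)
    (h2.const_mul _), integral_const_mul, integral_const_mul, integral_const_mul] at hibp
  rw [hc, integral_pow_succ_mul_tanh_mul_solQ_sq hm] at hibp
  rw [hc, eq_div_iff (by linarith)]
  linear_combination -2 * hibp

theorem integral_pow_mul_solQ_rpow_add_one (hm : 1 < m) (n : ℕ) :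
    ∫ y, y ^ (n + 2) * solQ m y ^ (m + 1)
      = (m + 1) / (m + 3) * (2 * (∫ y, y ^ (n + 2) * solQ m y ^ 2)
        - (n + 1) * (n + 2) / 2 * ∫ y, y ^ n * solQ m y ^ 2) := by
  have hI := integrable_pow_mul_tanh_pow_mul_solQ_sq hm
  have h2 : Integrable fun y => y ^ (n + 2) * solQ m y ^ 2 := by simpa using hI (n + 2) 0
  have hpt (y : ℝ) : y ^ (n + 2) * solQ m y ^ (m + 1) = (m + 1) / 2 * (y ^ (n + 2) * solQ m y ^ 2
      - y ^ (n + 2) * tanh ((m - 1) / 2 * y) ^ 2 * solQ m y ^ 2) := by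
    rw [solQ_rpow_add_one hm]
    ring
  simp_rw [hpt]
  rw [integral_const_mul, integral_sub h2 (hI (n + 2) 2), integral_pow_mul_tanh_sq_mul_solQ_sq hm]
  field_simp
  ring

theorem integral_pow_mul_deriv_solQ_sq (hm : 1 < m) (n : ℕ) :
    ∫ y, y ^ (n + 2) * deriv (solQ m) y ^ 2
      = (n + 1) * (n + 2) / (m + 3) * (∫ y, y ^ n * solQ m y ^ 2)
        + (m - 1) / (m + 3) * ∫ y, y ^ (n + 2) * solQ m y ^ 2 := by
  have hpt (y : ℝ) : y ^ (n + 2) * deriv (solQ m) y ^ 2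
      = y ^ (n + 2) * tanh ((m - 1) / 2 * y) ^ 2 * solQ m y ^ 2 := by
    rw [(hasDerivAt_solQ hm y).deriv]
    ring
  simp_rw [hpt]
  rw [integral_pow_mul_tanh_sq_mul_solQ_sq hm]
  ring

end Soliton

theorem stmt17 (m : ℝ) (hm : 1 < m) :
    (∫ y : ℝ, y ^ 2 * solQ m y ^ (m + 1))
      = ((m + 1) / (m + 3)) *
        (2 * (∫ y : ℝ, y ^ 2 * solQ m y ^ 2) - ∫ y : ℝ, solQ m y ^ 2) ∧
    (∫ y : ℝ, y ^ 2 * deriv (solQ m) y ^ 2)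
      = (2 / (m + 3)) * (∫ y : ℝ, solQ m y ^ 2)
        + ((m - 1) / (m + 3)) * ∫ y : ℝ, y ^ 2 * solQ m y ^ 2 ∧
    (∫ y : ℝ, y ^ 4 * solQ m y ^ (m + 1))
      = ((m + 1) / (m + 3)) *
        (2 * (∫ y : ℝ, y ^ 4 * solQ m y ^ 2) - 6 * ∫ y : ℝ, y ^ 2 * solQ m y ^ 2) := by
  have h₀ := integral_pow_mul_solQ_rpow_add_one hm 0
  have h₀' := integral_pow_mul_deriv_solQ_sq hm 0
  have h₂ := integral_pow_mul_solQ_rpow_add_one hm 2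
  norm_num at h₀ h₀' h₂
  exact ⟨h₀, h₀', h₂⟩
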